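/- Let B be a linearly ordered alphabet and consider the free F-algebra FB* on B (with basis all words). Fix for each pair b, c ∈ B an element [bc] ∈ FB spanned by single letters, and a scalar χ(b,c) ∈ F. Suppose λ : FB* → FB* is a linear map satisfying λ(f) = f for every non-increasing word f, and λ(u b c v) = χ(b,c) λ(u c b v) + λ(u [bc] v) whenever b ≺ c. Then for every word w, λ(w) lies in the span of non-increasing words (the image of λ is contained in FP, where P is the set of non-increasing words). -/

import Mathlib

/-
Induct on words ordered by length, then by number of inversions. A word that is not
non-increasing has an ascent `bc` with `b < c`; the straightening rule rewrites `λ(ubcv)` through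
`λ(ucbv)`, which has one inversion fewer, and through the words `uav` with `a` a letter of `[bc]`,
which are shorter.
-/

open MonoidAlgebra

/-- A word (free monoid element) is non-increasing if its letters weakly decrease. -/
def NonIncreasing {B : Type*} [LinearOrder B] (w : FreeMonoid B) : Prop :=
  List.Chain' (fun x y => y ≤ x) (FreeMonoid.toList w)

section Words

variable {B : Type*} [LinearOrder B]

open FreeMonoid

def invCount : List B → ℕ
  | [] => 0
  | a :: l => l.countP (a < ·) + invCount l

theorem invCount_swap_lt (u v : List B) {b c : B} (h : b < c) :
    invCount (u ++ c :: b :: v) < invCount (u ++ b :: c :: v) := by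
  induction u with
  | nil =>
    simp only [List.nil_append, invCount, List.countP_cons_of_pos, List.countP_cons_of_neg,
      h, h.not_gt, decide_true, decide_false, Bool.false_eq_true, not_false_eq_true]
    omega
  | cons a u ih =>
    simp only [List.cons_append, invCount, List.countP_append, List.countP_cons]
    omega

def lengthInvCount (w : FreeMonoid B) : ℕ ×ₗ ℕ :=
  toLex (w.length, invCount w.toList)

theorem lengthInvCount_swap_lt (u v : FreeMonoid B) {b c : B} (h : b < c) :
    lengthInvCount (u * of c * of b * v) < lengthInvCount (u * of b * of c * v) := by
  refine Prod.Lex.toLex_lt_toLex.2 (Or.inr ⟨by simp [length_mul], ?_⟩)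
  simpa [toList_mul, toList_of] using invCount_swap_lt u.toList v.toList h

theorem lengthInvCount_contract_lt (u v : FreeMonoid B) (a b c : B) :
    lengthInvCount (u * of a * v) < lengthInvCount (u * of b * of c * v) :=
  Prod.Lex.toLex_lt_toLex.2 (Or.inl (by simp [length_mul, length_of]))

theorem List.exists_ascent_of_not_isChain :
    ∀ l : List B, ¬ l.IsChain (fun x y => y ≤ x) →
      ∃ (u : List B) (b c : B) (v : List B), b < c ∧ l = u ++ b :: c :: v
  | [], h => absurd List.isChain_nil h
  | [a], h => absurd (List.isChain_singleton a) h
  | a :: b :: l, h => by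
    by_cases hba : b ≤ a
    · have htail : ¬ (b :: l).IsChain (fun x y => y ≤ x) := fun h' =>
        h (List.IsChain.cons_cons hba h')
      obtain ⟨u, b', c', v, hlt, hl⟩ := exists_ascent_of_not_isChain (b :: l) htail
      exact ⟨a :: u, b', c', v, hlt, by rw [hl]; rfl⟩
    · exact ⟨[], a, b, l, lt_of_not_ge hba, rfl⟩

theorem exists_ascent_of_not_nonIncreasing {w : FreeMonoid B} (hw : ¬ NonIncreasing w) :
    ∃ (u : FreeMonoid B) (b c : B) (v : FreeMonoid B),
      b < c ∧ w = u * of b * of c * v := by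
  obtain ⟨u, b, c, v, hbc, hw⟩ := List.exists_ascent_of_not_isChain _ hw
  exact ⟨ofList u, b, c, ofList v, hbc, toList.injective (by simp [hw])⟩

end Words

theorem map_single_mul_mul_single_mem {F : Type*} [CommSemiring F] {B : Type*}
    {lam : MonoidAlgebra F (FreeMonoid B) →ₗ[F] MonoidAlgebra F (FreeMonoid B)}
    {emb : (B →₀ F) →ₗ[F] MonoidAlgebra F (FreeMonoid B)}
    (hemb : ∀ b : B, emb (Finsupp.single b 1) = single (FreeMonoid.of b) (1 : F))
    {S : Submodule F (MonoidAlgebra F (FreeMonoid B))} {u v : FreeMonoid B}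
    (h : ∀ a : B, lam (single (u * FreeMonoid.of a * v) (1 : F)) ∈ S) (x : B →₀ F) :
    lam (single u 1 * emb x * single v 1) ∈ S := by
  induction x using Finsupp.induction_linear with
  | zero => simp
  | add x y hx hy => simpa only [map_add, mul_add, add_mul] using add_mem hx hy
  | single a r =>
    rw [← Finsupp.smul_single_one, map_smul, hemb, mul_smul_comm, smul_mul_assoc,
      single_mul_single, single_mul_single, one_mul, one_mul, map_smul]
    exact S.smul_mem r (h a)

/-- If a linear map λ on the free algebra FB* fixes non-increasing words and satisfies
the straightening rule λ(ubcv) = χ(b,c)λ(ucbv) + λ(u[bc]v) for b ≺ c, then the image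
of every word under λ lies in the span FP of non-increasing words. -/
theorem straightening_image {F : Type*} [Field F] {B : Type*} [LinearOrder B]
    (χ : B → B → F) (br : B → B → (B →₀ F))
    (lam : MonoidAlgebra F (FreeMonoid B) →ₗ[F] MonoidAlgebra F (FreeMonoid B))
    (emb : (B →₀ F) →ₗ[F] MonoidAlgebra F (FreeMonoid B))
    (hemb : ∀ b : B, emb (Finsupp.single b 1) =
      MonoidAlgebra.single (FreeMonoid.of b) (1 : F))
    (hfix : ∀ f : FreeMonoid B, NonIncreasing f →
      lam (MonoidAlgebra.single f (1 : F)) = MonoidAlgebra.single f (1 : F))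
    (hrule : ∀ (u v : FreeMonoid B) (b c : B), b < c →
      lam (MonoidAlgebra.single (u * FreeMonoid.of b * FreeMonoid.of c * v) (1 : F))
        = χ b c • lam (MonoidAlgebra.single
            (u * FreeMonoid.of c * FreeMonoid.of b * v) (1 : F))
          + lam (MonoidAlgebra.single u (1 : F) * emb (br b c)
              * MonoidAlgebra.single v (1 : F))) :
    ∀ w : FreeMonoid B, lam (MonoidAlgebra.single w (1 : F)) ∈
      Submodule.span F {x : MonoidAlgebra F (FreeMonoid B) |
        ∃ p : FreeMonoid B, NonIncreasing p ∧ x = MonoidAlgebra.single p (1 : F)} := by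
  intro w
  induction w using (InvImage.wf (lengthInvCount (B := B)) wellFounded_lt).induction with
  | _ w ih =>
  by_cases hw : NonIncreasing w
  · rw [hfix w hw]
    exact Submodule.subset_span ⟨w, hw, rfl⟩
  obtain ⟨u, b, c, v, hbc, rfl⟩ := exists_ascent_of_not_nonIncreasing hw
  rw [hrule u v b c hbc]
  refine add_mem (Submodule.smul_mem _ _ (ih _ (lengthInvCount_swap_lt u v hbc))) ?_
  exact map_single_mul_mul_single_mem hemb
    (fun a => ih _ (lengthInvCount_contract_lt u v a b c)) (br b c)
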